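/- arXiv:1408.5437 — 4 statements merged into one kernel-verified Lean document; each statement's English description precedes it below -/
import Mathlib

section
/- Let θ ∈ (0, π/2), a = √(1+sin²θ), κ = √(1 + 4h² + sin²θ) for some h > 0. Consider X(u,v) = (1/a)(C₃ + sinθ(D₁ cos(au) + D₂ sin(au))) + (u cosθ + b)ξ + (1/κ)(C₁(cos v − 1) + C₂ sin v), where C₁, C₂, D₁, D₂, ξ are orthonormal, C₃ is a unit vector with ⟨C₃, C₁⟩ = a/κ, C₃ ⊥ C₂, C₃ ⊥ ξ, C₃ ⊥ D₁, C₃ ⊥ D₂, and D₁, D₂ ⊥ C₁, C₂, ξ. Let X₁(u,v) = X(u,v) − ⟨X(u,v), ξ⟩ξ and C̃ = (1/a)C₃ − (1/κ)C₁. Then ⟨X₁(u,v) − C̃, C̃⟩ = 0 and |X₁(u,v) − C̃|² = (a² + κ² sin²θ)/(a²κ²) for all (u,v). -/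
/-!
Removing the `ξ`-component and subtracting `C̃` leaves
`X₁ - C̃ = (sin θ / a) (cos (a u) D₁ + sin (a u) D₂) + κ⁻¹ (cos v C₁ + sin v C₂)`,
a sum of two orthogonal vectors of lengths `sin θ / a` and `1 / κ`.
The condition `⟨C₃, C₁⟩ = a / κ` is exactly what makes `C̃` orthogonal to `C₁`,
so `C̃` is orthogonal to `C₁, C₂, D₁, D₂` and hence to `X₁ - C̃`,
and Pythagoras gives `|X₁ - C̃|² = sin² θ / a² + 1 / κ²`.
-/

open Real
open scoped RealInnerProductSpace

section

variable {E : Type*} [NormedAddCommGroup E] [InnerProductSpace ℝ E]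

theorem inner_cos_smul_add_sin_smul_eq_zero {w e₁ e₂ : E}
    (h₁ : ⟪w, e₁⟫ = 0) (h₂ : ⟪w, e₂⟫ = 0) (t : ℝ) :
    ⟪w, cos t • e₁ + sin t • e₂⟫ = 0 := by
  simp [inner_add_right, inner_smul_right, h₁, h₂]

theorem norm_cos_smul_add_sin_smul {e₁ e₂ : E} (h₁ : ‖e₁‖ = 1) (h₂ : ‖e₂‖ = 1)
    (h : ⟪e₁, e₂⟫ = 0) (t : ℝ) : ‖cos t • e₁ + sin t • e₂‖ = 1 := by
  have horth : ⟪cos t • e₁, sin t • e₂⟫ = 0 := by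
    simp [inner_smul_left, inner_smul_right, h]
  rw [← pow_eq_one_iff_of_nonneg (norm_nonneg _) two_ne_zero, norm_add_sq_real, horth,
    norm_smul, norm_smul, h₁, h₂]
  simp

end

theorem stmt_7_general (θ b h : ℝ)
    (C₁ C₂ C₃ D₁ D₂ ξ : EuclideanSpace ℝ (Fin 6))
    (hC₁ : ‖C₁‖ = 1) (hC₂ : ‖C₂‖ = 1)
    (hD₁ : ‖D₁‖ = 1) (hD₂ : ‖D₂‖ = 1) (hξ : ‖ξ‖ = 1)
    (o1 : ⟪C₁, C₂⟫ = 0) (o2 : ⟪C₁, D₁⟫ = 0) (o3 : ⟪C₁, D₂⟫ = 0) (o4 : ⟪C₁, ξ⟫ = 0)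
    (o5 : ⟪C₂, D₁⟫ = 0) (o6 : ⟪C₂, D₂⟫ = 0) (o7 : ⟪C₂, ξ⟫ = 0)
    (o8 : ⟪D₁, D₂⟫ = 0) (o9 : ⟪D₁, ξ⟫ = 0) (o10 : ⟪D₂, ξ⟫ = 0)
    (a κ : ℝ) (ha : a = Real.sqrt (1 + Real.sin θ ^ 2))
    (hκ : κ = Real.sqrt (1 + 4 * h ^ 2 + Real.sin θ ^ 2))
    (p1 : ⟪C₃, C₁⟫ = a / κ) (p2 : ⟪C₃, C₂⟫ = 0) (p3 : ⟪C₃, ξ⟫ = 0)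
    (p4 : ⟪C₃, D₁⟫ = 0) (p5 : ⟪C₃, D₂⟫ = 0)
    (X : ℝ → ℝ → EuclideanSpace ℝ (Fin 6))
    (hX : X = fun u v =>
      a⁻¹ • (C₃ + Real.sin θ • (Real.cos (a * u) • D₁ + Real.sin (a * u) • D₂))
      + (u * Real.cos θ + b) • ξ
      + κ⁻¹ • ((Real.cos v - 1) • C₁ + Real.sin v • C₂))
    (X₁ : ℝ → ℝ → EuclideanSpace ℝ (Fin 6))
    (hX₁ : X₁ = fun u v => X u v - ⟪X u v, ξ⟫ • ξ)
    (Ctilde : EuclideanSpace ℝ (Fin 6))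
    (hCt : Ctilde = a⁻¹ • C₃ - κ⁻¹ • C₁) :
    ∀ u v : ℝ, ⟪X₁ u v - Ctilde, Ctilde⟫ = 0
      ∧ ‖X₁ u v - Ctilde‖ ^ 2
          = (a ^ 2 + κ ^ 2 * Real.sin θ ^ 2) / (a ^ 2 * κ ^ 2) := by
  intro u v
  have ha0 : a ≠ 0 := by rw [ha]; positivity
  have hκ0 : κ ≠ 0 := by rw [hκ]; positivity
  set P := cos (a * u) • D₁ + sin (a * u) • D₂
  set Q := cos v • C₁ + sin v • C₂
  have hXξ : ⟪X u v, ξ⟫ = u * cos θ + b := by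
    simp [hX, inner_add_left, inner_smul_left, p3, o4, o7, o9, o10, hξ]
  have hdecomp : X₁ u v - Ctilde = (sin θ / a) • P + κ⁻¹ • Q := by
    rw [hX₁, hCt]
    simp only [hXξ]
    simp only [hX, P, Q]
    module
  have hCtC₁ : ⟪Ctilde, C₁⟫ = 0 := by
    rw [hCt, inner_sub_left, real_inner_smul_left, real_inner_smul_left, p1,
      real_inner_self_eq_norm_sq, hC₁]
    field_simp
    ring
  have hCtC₂ : ⟪Ctilde, C₂⟫ = 0 := by simp [hCt, inner_sub_left, inner_smul_left, p2, o1]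
  have hCtD₁ : ⟪Ctilde, D₁⟫ = 0 := by simp [hCt, inner_sub_left, inner_smul_left, p4, o2]
  have hCtD₂ : ⟪Ctilde, D₂⟫ = 0 := by simp [hCt, inner_sub_left, inner_smul_left, p5, o3]
  have hPQ : ⟪P, Q⟫ = 0 := by
    refine inner_cos_smul_add_sin_smul_eq_zero ?_ ?_ v <;> rw [real_inner_comm]
    · exact inner_cos_smul_add_sin_smul_eq_zero o2 o3 _
    · exact inner_cos_smul_add_sin_smul_eq_zero o5 o6 _
  constructor
  · rw [hdecomp, real_inner_comm, inner_add_right, inner_smul_right, inner_smul_right,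
      inner_cos_smul_add_sin_smul_eq_zero hCtD₁ hCtD₂,
      inner_cos_smul_add_sin_smul_eq_zero hCtC₁ hCtC₂]
    simp
  · have horth : ⟪(sin θ / a) • P, κ⁻¹ • Q⟫ = 0 := by
      simp [inner_smul_left, inner_smul_right, hPQ]
    rw [hdecomp, norm_add_sq_real, horth, norm_smul, norm_smul,
      norm_cos_smul_add_sin_smul hD₁ hD₂ o8, norm_cos_smul_add_sin_smul hC₁ hC₂ o1]
    simp only [norm_eq_abs, mul_one, sq_abs, div_pow, inv_pow]
    field_simp
    ring

/-- For the surface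
`X(u,v) = (1/a)(C₃ + sinθ(D₁cos(au) + D₂sin(au))) + (u cosθ + b)ξ + (1/κ)(C₁(cos v - 1) + C₂ sin v)`
in `ℝ⁶ = ℝ⁵ × ℝ`, with `a = √(1+sin²θ)`, `κ = √(1+4h²+sin²θ)`, `C₁, C₂, D₁, D₂, ξ` orthonormal,
`C₃` a unit vector with `⟨C₃,C₁⟩ = a/κ` orthogonal to `C₂, ξ, D₁, D₂`,
the projection `X₁ = X - ⟨X,ξ⟩ξ` and `C̃ = (1/a)C₃ - (1/κ)C₁` satisfy
`⟨X₁ - C̃, C̃⟩ = 0` and `|X₁ - C̃|² = (a² + κ²sin²θ)/(a²κ²)`. -/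
theorem stmt_7 (θ b h : ℝ) (hθ : θ ∈ Set.Ioo 0 (Real.pi / 2)) (hh : 0 < h)
    (C₁ C₂ C₃ D₁ D₂ ξ : EuclideanSpace ℝ (Fin 6))
    (hC₁ : ‖C₁‖ = 1) (hC₂ : ‖C₂‖ = 1) (hC₃ : ‖C₃‖ = 1)
    (hD₁ : ‖D₁‖ = 1) (hD₂ : ‖D₂‖ = 1) (hξ : ‖ξ‖ = 1)
    (o1 : ⟪C₁, C₂⟫ = 0) (o2 : ⟪C₁, D₁⟫ = 0) (o3 : ⟪C₁, D₂⟫ = 0) (o4 : ⟪C₁, ξ⟫ = 0)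
    (o5 : ⟪C₂, D₁⟫ = 0) (o6 : ⟪C₂, D₂⟫ = 0) (o7 : ⟪C₂, ξ⟫ = 0)
    (o8 : ⟪D₁, D₂⟫ = 0) (o9 : ⟪D₁, ξ⟫ = 0) (o10 : ⟪D₂, ξ⟫ = 0)
    (a κ : ℝ) (ha : a = Real.sqrt (1 + Real.sin θ ^ 2))
    (hκ : κ = Real.sqrt (1 + 4 * h ^ 2 + Real.sin θ ^ 2))
    (p1 : ⟪C₃, C₁⟫ = a / κ) (p2 : ⟪C₃, C₂⟫ = 0) (p3 : ⟪C₃, ξ⟫ = 0)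
    (p4 : ⟪C₃, D₁⟫ = 0) (p5 : ⟪C₃, D₂⟫ = 0)
    (X : ℝ → ℝ → EuclideanSpace ℝ (Fin 6))
    (hX : X = fun u v =>
      a⁻¹ • (C₃ + Real.sin θ • (Real.cos (a * u) • D₁ + Real.sin (a * u) • D₂))
      + (u * Real.cos θ + b) • ξ
      + κ⁻¹ • ((Real.cos v - 1) • C₁ + Real.sin v • C₂))
    (X₁ : ℝ → ℝ → EuclideanSpace ℝ (Fin 6))
    (hX₁ : X₁ = fun u v => X u v - ⟪X u v, ξ⟫ • ξ)
    (Ctilde : EuclideanSpace ℝ (Fin 6))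
    (hCt : Ctilde = a⁻¹ • C₃ - κ⁻¹ • C₁) :
    ∀ u v : ℝ, ⟪X₁ u v - Ctilde, Ctilde⟫ = 0
      ∧ ‖X₁ u v - Ctilde‖ ^ 2
          = (a ^ 2 + κ ^ 2 * Real.sin θ ^ 2) / (a ^ 2 * κ ^ 2) :=
  stmt_7_general θ b h C₁ C₂ C₃ D₁ D₂ ξ hC₁ hC₂ hD₁ hD₂ hξ o1 o2 o3 o4 o5 o6 o7 o8 o9 o10 a κ ha hκ
    p1 p2 p3 p4 p5 X hX X₁ hX₁ Ctilde hCt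
end

section
/- The surface X(u,v) from the previous statement satisfies |X₁(u,v)|² = 1 for all (u,v), i.e., its projection to ℝ⁵ lies in the unit sphere S⁴. -/
open scoped RealInnerProductSpace

/-! Since `ξ` is orthogonal to all the other frame vectors, `X₁ = a⁻¹ P + κ⁻¹ Q` with
`P = C₃ + sin θ (cos(au) D₁ + sin(au) D₂)` and `Q = (cos v - 1) C₁ + sin v C₂`.
Then `‖P‖² = 1 + sin²θ = a²`, `‖Q‖² = 2 - 2 cos v` and `⟪P, Q⟫ = (cos v - 1) a / κ`, so the
cross term `2 a⁻¹ κ⁻¹ ⟪P, Q⟫ = -κ⁻² ‖Q‖²` cancels the `Q`-contribution and `‖X₁‖² = a⁻² ‖P‖² = 1`. -/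

section InnerProductSpace

variable {E : Type*} [NormedAddCommGroup E] [InnerProductSpace ℝ E]

theorem add_smul_sub_inner_smul_eq_of_inner_eq_zero {y ξ : E} (hξ : ‖ξ‖ = 1)
    (hy : ⟪y, ξ⟫ = 0) (t : ℝ) : y + t • ξ - ⟪y + t • ξ, ξ⟫ • ξ = y := by
  rw [inner_add_left, hy, real_inner_smul_left, real_inner_self_eq_norm_sq, hξ]
  simp

theorem norm_smul_add_smul_sq_of_orthonormal {e₁ e₂ : E} (h₁ : ‖e₁‖ = 1) (h₂ : ‖e₂‖ = 1)
    (h : ⟪e₁, e₂⟫ = 0) (x y : ℝ) : ‖x • e₁ + y • e₂‖ ^ 2 = x ^ 2 + y ^ 2 := by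
  rw [norm_add_sq_real, real_inner_smul_left, real_inner_smul_right, h, norm_smul, norm_smul,
    h₁, h₂, Real.norm_eq_abs, Real.norm_eq_abs]
  simp [sq_abs]

end InnerProductSpace

theorem stmt_8_general (θ b : ℝ)
    (C₁ C₂ C₃ D₁ D₂ ξ : EuclideanSpace ℝ (Fin 6))
    (hC₁ : ‖C₁‖ = 1) (hC₂ : ‖C₂‖ = 1) (hC₃ : ‖C₃‖ = 1)
    (hD₁ : ‖D₁‖ = 1) (hD₂ : ‖D₂‖ = 1) (hξ : ‖ξ‖ = 1)
    (o1 : ⟪C₁, C₂⟫ = 0) (o2 : ⟪C₁, D₁⟫ = 0) (o3 : ⟪C₁, D₂⟫ = 0) (o4 : ⟪C₁, ξ⟫ = 0)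
    (o5 : ⟪C₂, D₁⟫ = 0) (o6 : ⟪C₂, D₂⟫ = 0) (o7 : ⟪C₂, ξ⟫ = 0)
    (o8 : ⟪D₁, D₂⟫ = 0) (o9 : ⟪D₁, ξ⟫ = 0) (o10 : ⟪D₂, ξ⟫ = 0)
    (a κ : ℝ) (ha : a = Real.sqrt (1 + Real.sin θ ^ 2))
    (p1 : ⟪C₃, C₁⟫ = a / κ) (p2 : ⟪C₃, C₂⟫ = 0) (p3 : ⟪C₃, ξ⟫ = 0)
    (p4 : ⟪C₃, D₁⟫ = 0) (p5 : ⟪C₃, D₂⟫ = 0)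
    (X : ℝ → ℝ → EuclideanSpace ℝ (Fin 6))
    (hX : X = fun u v =>
      a⁻¹ • (C₃ + Real.sin θ • (Real.cos (a * u) • D₁ + Real.sin (a * u) • D₂))
      + (u * Real.cos θ + b) • ξ
      + κ⁻¹ • ((Real.cos v - 1) • C₁ + Real.sin v • C₂))
    (X₁ : ℝ → ℝ → EuclideanSpace ℝ (Fin 6))
    (hX₁ : X₁ = fun u v => X u v - ⟪X u v, ξ⟫ • ξ)
 :
    ∀ u v : ℝ, ‖X₁ u v‖ ^ 2 = 1 := by
  intro u v
  set W := Real.cos (a * u) • D₁ + Real.sin (a * u) • D₂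
  set P := C₃ + Real.sin θ • W
  set Q := (Real.cos v - 1) • C₁ + Real.sin v • C₂
  have hX₁uv : X₁ u v = a⁻¹ • P + κ⁻¹ • Q := by
    have hξ_perp : ⟪a⁻¹ • P + κ⁻¹ • Q, ξ⟫ = 0 := by
      simp only [P, Q, W, inner_add_left, real_inner_smul_left, p3, o9, o10, o4, o7]
      ring
    rw [hX₁, hX]
    dsimp only
    rw [add_right_comm]
    exact add_smul_sub_inner_smul_eq_of_inner_eq_zero hξ hξ_perp _
  have hW : ‖W‖ ^ 2 = 1 := by
    rw [norm_smul_add_smul_sq_of_orthonormal hD₁ hD₂ o8, Real.cos_sq_add_sin_sq]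
  have hP : ‖P‖ ^ 2 = a ^ 2 := by
    have hC₃W : ⟪C₃, Real.sin θ • W⟫ = 0 := by
      simp only [W, real_inner_smul_right, inner_add_right, p4, p5]
      ring
    rw [norm_add_sq_real, hC₃W, norm_smul, mul_pow, hW, hC₃, ha, Real.sq_sqrt (by positivity),
      Real.norm_eq_abs, sq_abs]
    ring
  have hQ : ‖Q‖ ^ 2 = 2 * (1 - Real.cos v) := by
    rw [norm_smul_add_smul_sq_of_orthonormal hC₁ hC₂ o1]
    linear_combination Real.sin_sq_add_cos_sq v
  have hPQ : ⟪P, Q⟫ = (Real.cos v - 1) * (a / κ) := by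
    simp only [P, Q, W, inner_add_left, inner_add_right, real_inner_smul_left,
      real_inner_smul_right, real_inner_comm C₁ D₁, real_inner_comm C₁ D₂,
      real_inner_comm C₂ D₁, real_inner_comm C₂ D₂, p1, p2, o2, o3, o5, o6]
    ring
  have ha_ne : a ≠ 0 := by
    rw [ha]
    positivity
  rw [hX₁uv, norm_add_sq_real, norm_smul, norm_smul, mul_pow, mul_pow, hP, hQ,
    real_inner_smul_left, real_inner_smul_right, hPQ, Real.norm_eq_abs, Real.norm_eq_abs,
    sq_abs, sq_abs]
  field_simp
  ring

/-- For the surface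
`X(u,v) = (1/a)(C₃ + sinθ(D₁cos(au) + D₂sin(au))) + (u cosθ + b)ξ + (1/κ)(C₁(cos v - 1) + C₂ sin v)`
in `ℝ⁶ = ℝ⁵ × ℝ`, with `a = √(1+sin²θ)`, `κ = √(1+4h²+sin²θ)`, `C₁, C₂, D₁, D₂, ξ` orthonormal,
`C₃` a unit vector with `⟨C₃,C₁⟩ = a/κ` orthogonal to `C₂, ξ, D₁, D₂`,
the projection `X₁ = X - ⟨X,ξ⟩ξ` to `ℝ⁵` satisfies `|X₁(u,v)|² = 1` for all `(u,v)`,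
i.e. it lies in the unit sphere `S⁴`. -/
theorem stmt_8 (θ b h : ℝ) (hθ : θ ∈ Set.Ioo 0 (Real.pi / 2)) (hh : 0 < h)
    (C₁ C₂ C₃ D₁ D₂ ξ : EuclideanSpace ℝ (Fin 6))
    (hC₁ : ‖C₁‖ = 1) (hC₂ : ‖C₂‖ = 1) (hC₃ : ‖C₃‖ = 1)
    (hD₁ : ‖D₁‖ = 1) (hD₂ : ‖D₂‖ = 1) (hξ : ‖ξ‖ = 1)
    (o1 : ⟪C₁, C₂⟫ = 0) (o2 : ⟪C₁, D₁⟫ = 0) (o3 : ⟪C₁, D₂⟫ = 0) (o4 : ⟪C₁, ξ⟫ = 0)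
    (o5 : ⟪C₂, D₁⟫ = 0) (o6 : ⟪C₂, D₂⟫ = 0) (o7 : ⟪C₂, ξ⟫ = 0)
    (o8 : ⟪D₁, D₂⟫ = 0) (o9 : ⟪D₁, ξ⟫ = 0) (o10 : ⟪D₂, ξ⟫ = 0)
    (a κ : ℝ) (ha : a = Real.sqrt (1 + Real.sin θ ^ 2))
    (hκ : κ = Real.sqrt (1 + 4 * h ^ 2 + Real.sin θ ^ 2))
    (p1 : ⟪C₃, C₁⟫ = a / κ) (p2 : ⟪C₃, C₂⟫ = 0) (p3 : ⟪C₃, ξ⟫ = 0)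
    (p4 : ⟪C₃, D₁⟫ = 0) (p5 : ⟪C₃, D₂⟫ = 0)
    (X : ℝ → ℝ → EuclideanSpace ℝ (Fin 6))
    (hX : X = fun u v =>
      a⁻¹ • (C₃ + Real.sin θ • (Real.cos (a * u) • D₁ + Real.sin (a * u) • D₂))
      + (u * Real.cos θ + b) • ξ
      + κ⁻¹ • ((Real.cos v - 1) • C₁ + Real.sin v • C₂))
    (X₁ : ℝ → ℝ → EuclideanSpace ℝ (Fin 6))
    (hX₁ : X₁ = fun u v => X u v - ⟪X u v, ξ⟫ • ξ)
 :
    ∀ u v : ℝ, ‖X₁ u v‖ ^ 2 = 1 :=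
  stmt_8_general θ b C₁ C₂ C₃ D₁ D₂ ξ hC₁ hC₂ hC₃ hD₁ hD₂ hξ o1 o2 o3 o4 o5 o6 o7 o8 o9 o10 a κ ha
    p1 p2 p3 p4 p5 X hX X₁ hX₁
end

section
/- Let c > 0 and a, b ∈ ℝ with 0 < a² + b² < 1 and b² > a². Define h ≥ 0 by h² = c(1 − a² − b²)(b² − a²)²/(4(1−a²)(1−b²)). Then h·(2 − a² − b²) = √(h² + c(1 − a² − b²))·(b² − a²), i.e., h satisfies the biharmonicity equation h(2 − a² − b²) + √(h² + c(1−a²−b²))(a² − b²) = 0. -/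
/-! With `x = a²`, `y = b²`, `k = c(1 - a² - b²)` and `D = 4(1 - x)(1 - y) > 0`, the identity
`(y - x)² + D = (2 - x - y)²` gives `h² + k = (k / D)(2 - x - y)²`, while `h² = (k / D)(y - x)²`.
Both sides of the equation are therefore `√(k / D) (2 - x - y)(y - x)`. -/

theorem sq_sub_add_four_mul_one_sub_mul_one_sub {R : Type*} [CommRing R] (x y : R) :
    (y - x) ^ 2 + 4 * (1 - x) * (1 - y) = (2 - x - y) ^ 2 := by
  ring

theorem mul_two_sub_sub_eq_sqrt_sq_add_mul_sub {k x y h : ℝ} (hk : 0 ≤ k) (hxy : x ≤ y)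
    (hx : x < 1) (hy : y < 1) (hh : h = √(k * (y - x) ^ 2 / (4 * (1 - x) * (1 - y)))) :
    h * (2 - x - y) = √(h ^ 2 + k) * (y - x) := by
  have hD : 0 < 4 * (1 - x) * (1 - y) := by
    have := sub_pos.2 hx; have := sub_pos.2 hy; positivity
  set q := k / (4 * (1 - x) * (1 - y)) with hq
  have hq_nonneg : 0 ≤ q := div_nonneg hk hD.le
  have hh' : h = √q * (y - x) := by
    rw [hh, mul_div_right_comm, ← hq, Real.sqrt_mul hq_nonneg, Real.sqrt_sq (sub_nonneg.2 hxy)]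
  have hk' : h ^ 2 + k = q * (2 - x - y) ^ 2 := by
    rw [hh', mul_pow, Real.sq_sqrt hq_nonneg, ← sq_sub_add_four_mul_one_sub_mul_one_sub, mul_add,
      hq, div_mul_cancel₀ _ hD.ne']
  rw [hk', Real.sqrt_mul hq_nonneg, Real.sqrt_sq (by linarith), hh']
  ring

theorem stmt_10_general (a b c h : ℝ) (hc : 0 < c)
    (h2 : a ^ 2 + b ^ 2 < 1) (hba : a ^ 2 < b ^ 2)
    (hh : h = Real.sqrt (c * (1 - a ^ 2 - b ^ 2) * (b ^ 2 - a ^ 2) ^ 2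
      / (4 * (1 - a ^ 2) * (1 - b ^ 2)))) :
    h * (2 - a ^ 2 - b ^ 2)
        = Real.sqrt (h ^ 2 + c * (1 - a ^ 2 - b ^ 2)) * (b ^ 2 - a ^ 2)
    ∧ h * (2 - a ^ 2 - b ^ 2)
        + Real.sqrt (h ^ 2 + c * (1 - a ^ 2 - b ^ 2)) * (a ^ 2 - b ^ 2) = 0 := by
  have ha1 : a ^ 2 < 1 := by linarith [sq_nonneg b]
  have hb1 : b ^ 2 < 1 := by linarith [sq_nonneg a]
  have hk : 0 ≤ c * (1 - a ^ 2 - b ^ 2) := mul_nonneg hc.le (by linarith)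
  have hmain := mul_two_sub_sub_eq_sqrt_sq_add_mul_sub hk hba.le ha1 hb1 hh
  refine ⟨hmain, ?_⟩
  rw [hmain]
  ring

/-- For `c > 0`, `0 < a² + b² < 1`, `b² > a²`, the number
`h = √(c(1-a²-b²)(b²-a²)²/(4(1-a²)(1-b²))) ≥ 0` satisfies
`h(2-a²-b²) = √(h² + c(1-a²-b²))·(b²-a²)`, i.e. the biharmonicity equation
`h(2-a²-b²) + √(h² + c(1-a²-b²))(a²-b²) = 0`. -/
theorem stmt_10 (a b c h : ℝ) (hc : 0 < c)
    (h1 : 0 < a ^ 2 + b ^ 2) (h2 : a ^ 2 + b ^ 2 < 1) (hba : a ^ 2 < b ^ 2)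
    (hh : h = Real.sqrt (c * (1 - a ^ 2 - b ^ 2) * (b ^ 2 - a ^ 2) ^ 2
      / (4 * (1 - a ^ 2) * (1 - b ^ 2)))) :
    h * (2 - a ^ 2 - b ^ 2)
        = Real.sqrt (h ^ 2 + c * (1 - a ^ 2 - b ^ 2)) * (b ^ 2 - a ^ 2)
    ∧ h * (2 - a ^ 2 - b ^ 2)
        + Real.sqrt (h ^ 2 + c * (1 - a ^ 2 - b ^ 2)) * (a ^ 2 - b ^ 2) = 0 :=
  stmt_10_general a b c h hc h2 hba hh
end

section
/- Let Σ be a 2-dimensional Riemannian manifold and φ a smooth symmetric traceless (1,1)-tensor field on Σ satisfying the Codazzi equation (∇_X φ)Y = (∇_Y φ)X. Then ½ Δ|φ|² = 2K|φ|² + |∇φ|², where K is the Gaussian curvature of Σ and Δ is the Laplace–Beltrami operator. -/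
/- We formalize the Simons-type formula (Theorem 5.1 of the paper) for a Riemannian
surface in local isothermal coordinates: every Riemannian 2-manifold is locally
isometric to an open piece of `ℝ²` with conformal metric `g = e^{2ρ}(dx² + dy²)`,
and the asserted identity is pointwise, so the local coordinate formulation is
equivalent to the invariant one. Below, `φ i j` are the components of a
`(1,1)`-tensor field (upper index `i`, lower index `j`). -/

noncomputable section

/-- Partial derivative in the `i`-th coordinate direction of a function on `ℝ²`. -/
def pd (i : Fin 2) (f : (Fin 2 → ℝ) → ℝ) (p : Fin 2 → ℝ) : ℝ :=
  fderiv ℝ f p (Pi.single i 1)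

/-- Christoffel symbols `Γ^i_{jk}` of the conformal metric `g = e^{2ρ}(dx² + dy²)`. -/
def Γconf (ρ : (Fin 2 → ℝ) → ℝ) (i j k : Fin 2) (p : Fin 2 → ℝ) : ℝ :=
  (if i = j then pd k ρ p else 0) + (if i = k then pd j ρ p else 0)
    - (if j = k then pd i ρ p else 0)

/-- Components `∇_k φ^i_j` of the covariant derivative of a `(1,1)`-tensor field `φ`
with respect to the Levi-Civita connection of `g = e^{2ρ}(dx² + dy²)`. -/
def covD (ρ : (Fin 2 → ℝ) → ℝ) (φ : Fin 2 → Fin 2 → (Fin 2 → ℝ) → ℝ)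
    (k i j : Fin 2) (p : Fin 2 → ℝ) : ℝ :=
  pd k (φ i j) p + ∑ m : Fin 2, Γconf ρ i k m p * φ m j p
    - ∑ m : Fin 2, Γconf ρ m k j p * φ i m p

/-- Laplace–Beltrami operator of the conformal metric `g = e^{2ρ}(dx² + dy²)`. -/
def lapConf (ρ : (Fin 2 → ℝ) → ℝ) (f : (Fin 2 → ℝ) → ℝ) (p : Fin 2 → ℝ) : ℝ :=
  Real.exp (-(2 * ρ p)) * (pd 0 (pd 0 f) p + pd 1 (pd 1 f) p)

lemma pd_contDiff {f : (Fin 2 → ℝ) → ℝ} (hf : ContDiff ℝ (⊤ : ℕ∞) f) (i : Fin 2) :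
    ContDiff ℝ (⊤ : ℕ∞) (pd i f) :=
  (hf.fderiv_right ((by simp))).clm_apply contDiff_const

lemma pd_comm {f : (Fin 2 → ℝ) → ℝ} (hf : ContDiff ℝ (⊤ : ℕ∞) f) (i j : Fin 2) (p : Fin 2 → ℝ) :
    pd i (pd j f) p = pd j (pd i f) p := by
  have hd : DifferentiableAt ℝ (fderiv ℝ f) p :=
    ((hf.fderiv_right (m := 1) (WithTop.coe_le_coe.mpr le_top)).differentiable (by simp)) p
  have hsymm : IsSymmSndFDerivAt ℝ f p :=
    hf.contDiffAt.isSymmSndFDerivAt (by rw [minSmoothness_of_isRCLikeNormedField]; exact WithTop.coe_le_coe.mpr le_top)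
  unfold pd
  rw [fderiv_clm_apply hd (differentiableAt_const _),
      fderiv_clm_apply hd (differentiableAt_const _)]
  simp [hsymm.eq (Pi.single i 1) (Pi.single j 1)]

lemma pdF_add {f g : (Fin 2 → ℝ) → ℝ} (hf : Differentiable ℝ f) (hg : Differentiable ℝ g)
    (i : Fin 2) : pd i (fun q => f q + g q) = fun p => pd i f p + pd i g p := by
  funext p; simp only [pd, fderiv_fun_add (hf p) (hg p)]; simp

lemma pdF_sub {f g : (Fin 2 → ℝ) → ℝ} (hf : Differentiable ℝ f) (hg : Differentiable ℝ g)
    (i : Fin 2) : pd i (fun q => f q - g q) = fun p => pd i f p - pd i g p := by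
  funext p; simp only [pd, fderiv_fun_sub (hf p) (hg p)]; simp

lemma pdF_neg {f : (Fin 2 → ℝ) → ℝ} (i : Fin 2) :
    pd i (fun q => -f q) = fun p => -pd i f p := by
  funext p; simp only [pd, fderiv_neg]; simp

lemma pdF_mul {f g : (Fin 2 → ℝ) → ℝ} (hf : Differentiable ℝ f) (hg : Differentiable ℝ g)
    (i : Fin 2) : pd i (fun q => f q * g q)
      = fun p => pd i f p * g p + f p * pd i g p := by
  funext p; simp only [pd, fderiv_fun_mul (hf p) (hg p)]; simp; ring

lemma pdF_const_mul {f : (Fin 2 → ℝ) → ℝ} (hf : Differentiable ℝ f) (c : ℝ)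
    (i : Fin 2) : pd i (fun q => c * f q) = fun p => c * pd i f p := by
  funext p; simp only [pd, fderiv_const_mul (hf p) c]; simp

lemma pdF_const (c : ℝ) (i : Fin 2) : pd i (fun _ => c) = fun _ => 0 := by
  funext p; simp [pd]

lemma pdF_zero (i : Fin 2) : pd i (fun _ => (0:ℝ)) = fun _ => 0 := by
  funext p; simp [pd]

lemma pdF_pow {f : (Fin 2 → ℝ) → ℝ} (hf : Differentiable ℝ f) (i : Fin 2) :
    pd i (fun q => f q ^ 2) = fun p => 2 * f p * pd i f p := by
  funext p
  have h : (fun q => f q ^ 2) = fun q => f q * f q := by funext q; ring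
  rw [h]
  simp only [pd, fderiv_fun_mul (hf p) (hf p)]; simp; ring

/-- **Simons-type formula.** If `φ` is a smooth symmetric traceless `(1,1)`-tensor field
on a Riemannian surface (here in isothermal coordinates with metric `e^{2ρ}(dx²+dy²)`,
whose Gaussian curvature is `K = -Δρ`) satisfying the Codazzi equation
`(∇_Xφ)Y = (∇_Yφ)X`, then `½Δ|φ|² = 2K|φ|² + |∇φ|²`.
(For a `(1,1)`-tensor on a surface the Hilbert–Schmidt norm is `|φ|² = Σᵢⱼ (φ^i_j)²`
and `|∇φ|² = e^{-2ρ} Σₖᵢⱼ (∇_kφ^i_j)²`.) -/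
theorem stmt_13 (ρ : (Fin 2 → ℝ) → ℝ) (φ : Fin 2 → Fin 2 → (Fin 2 → ℝ) → ℝ)
    (hρ : ContDiff ℝ (⊤ : ℕ∞) ρ) (hφ : ∀ i j, ContDiff ℝ (⊤ : ℕ∞) (φ i j))
    (hsymm : ∀ p, φ 0 1 p = φ 1 0 p)
    (htraceless : ∀ p, φ 0 0 p + φ 1 1 p = 0)
    (hcodazzi : ∀ (i : Fin 2) (p : Fin 2 → ℝ), covD ρ φ 0 i 1 p = covD ρ φ 1 i 0 p) :
    ∀ p : Fin 2 → ℝ,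
      (1 / 2) * lapConf ρ (fun q => ∑ i : Fin 2, ∑ j : Fin 2, (φ i j q) ^ 2) p
        = 2 * (-(lapConf ρ ρ p)) * (∑ i : Fin 2, ∑ j : Fin 2, (φ i j p) ^ 2)
          + Real.exp (-(2 * ρ p))
            * ∑ k : Fin 2, ∑ i : Fin 2, ∑ j : Fin 2, (covD ρ φ k i j p) ^ 2 := by
  intro p
  have h10 : φ 1 0 = φ 0 1 := funext fun q => (hsymm q).symm
  have h11 : φ 1 1 = fun q => -φ 0 0 q := funext fun q => by linarith [htraceless q]
  have dA : Differentiable ℝ (φ 0 0) := (hφ 0 0).differentiable (by simp)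
  have dB : Differentiable ℝ (φ 0 1) := (hφ 0 1).differentiable (by simp)
  have dρ : Differentiable ℝ ρ := hρ.differentiable (by simp)
  have dA0 : Differentiable ℝ (pd 0 (φ 0 0)) := (pd_contDiff (hφ 0 0) 0).differentiable (by simp)
  have dA1 : Differentiable ℝ (pd 1 (φ 0 0)) := (pd_contDiff (hφ 0 0) 1).differentiable (by simp)
  have dB0 : Differentiable ℝ (pd 0 (φ 0 1)) := (pd_contDiff (hφ 0 1) 0).differentiable (by simp)
  have dB1 : Differentiable ℝ (pd 1 (φ 0 1)) := (pd_contDiff (hφ 0 1) 1).differentiable (by simp)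
  have dρ0 : Differentiable ℝ (pd 0 ρ) := (pd_contDiff hρ 0).differentiable (by simp)
  have dρ1 : Differentiable ℝ (pd 1 ρ) := (pd_contDiff hρ 1).differentiable (by simp)
  have hF0 : (fun q => covD ρ φ 0 0 1 q) = (fun q => covD ρ φ 1 0 0 q) :=
    funext (hcodazzi 0)
  have hF1 : (fun q => covD ρ φ 0 1 1 q) = (fun q => covD ρ φ 1 1 0 q) :=
    funext (hcodazzi 1)
  have hP0 := hcodazzi 0 p
  have hP1 := hcodazzi 1 p
  have hE1 := congrArg (fun f => pd 0 f p) hF0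
  have hE2 := congrArg (fun f => pd 1 f p) hF0
  have hE3 := congrArg (fun f => pd 0 f p) hF1
  have hE4 := congrArg (fun f => pd 1 f p) hF1
  have hsA := pd_comm (hφ 0 0) 0 1 p
  have hsB := pd_comm (hφ 0 1) 0 1 p
  simp (disch := fun_prop) only [lapConf, covD, Γconf, Fin.sum_univ_two, h10, h11,
    neg_sq, pdF_add, pdF_sub, pdF_neg, pdF_mul, pdF_const_mul, pdF_pow, pdF_zero, pdF_const,
    reduceIte, Fin.isValue, one_ne_zero, zero_ne_one, if_true, if_false] at hE1 hE2 hE3 hE4 hP0 hP1 ⊢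
  linear_combination (Real.exp (-(2 * ρ p))) *
      ( (2 * φ 0 1 p) * hE1 - (2 * φ 0 0 p) * hE2 - (2 * φ 0 0 p) * hE3 - (2 * φ 0 1 p) * hE4
        + (4 * φ 0 0 p * pd 1 ρ p - 4 * φ 0 1 p * pd 0 ρ p) * hP0
        + (4 * φ 0 1 p * pd 1 ρ p + 4 * φ 0 0 p * pd 0 ρ p) * hP1
        + (2 * φ 0 1 p) * hsA - (2 * φ 0 0 p) * hsB )


end
end
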